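/- Operators A : X → X' and B : Y → X' form a positive pair if and only if there exists a non-negative D : Y → Y' such that the block operator [[A, B],[B~, D]] is non-negative. Moreover, when (A, B) is a positive pair, 𝐀_ex := [[A, B],[B~, ω(A,B)]] is the minimal element (in Loewner ordering of the lower-right block) among all such non-negative completions. -/

import Mathlib

open scoped ComplexOrder ComplexConjugate
open Complex

noncomputable section

/-- For a linear map `R : V → H` into a Hilbert space, `adjMap R : H → V'` is the
operator `R*`, sending `h` to the antilinear functional `v ↦ (h | R v)`
(in Mathlib's convention, `v ↦ ⟪R v, h⟫`). -/
def adjMap {V H : Type*} [AddCommGroup V] [Module ℂ V]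
    [NormedAddCommGroup H] [InnerProductSpace ℂ H] (R : V →ₗ[ℂ] H) :
    H →ₗ[ℂ] (V →ₗ⋆[ℂ] ℂ) where
  toFun h :=
    { toFun := fun v => @inner ℂ _ _ (R v) h
      map_add' := fun v w => by simp [inner_add_left]
      map_smul' := fun c v => by simp [inner_smul_left, mul_comm] }
  map_add' h₁ h₂ := by ext v; simp [inner_add_right]
  map_smul' c h := by ext v; simp [inner_smul_right]

/-- For `B : Y → X'`, the operator `B~ := B'↾X : X → Y'`, `(B~ x) y = conj (⟨B y, x⟩)`. -/
def Btilde {X Y : Type*} [AddCommGroup X] [Module ℂ X] [AddCommGroup Y] [Module ℂ Y]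
    (B : Y →ₗ[ℂ] (X →ₗ⋆[ℂ] ℂ)) : X →ₗ[ℂ] (Y →ₗ⋆[ℂ] ℂ) where
  toFun x :=
    { toFun := fun y => conj (B y x)
      map_add' := fun y₁ y₂ => by simp
      map_smul' := fun c y => by simp }
  map_add' x₁ x₂ := by ext y; simp
  map_smul' c x := by ext y; simp

/-!
With `A = R*R`, any `T` with `R*T = B` turns the block form into
`‖R x + T y‖² + (D y y - ‖T y‖²)`. Taking `D = T*T` gives a non-negative completion, and since
`-T y` is a limit of vectors `R x`, every non-negative completion satisfies `‖T y‖² ≤ D y y`.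
Conversely, testing the block form at `(c • x, y)` for all `c : ℂ` gives the Cauchy–Schwarz bound
`|B y x|² ≤ ‖R x‖² · D y y`, so `B y` is a bounded functional of `R x`; Hahn–Banach and Riesz
represent it by a vector of `closure (range R)`; that vector is unique, so it depends linearly
on `y`.
-/

section Basic

variable {X Y H : Type*} [AddCommGroup X] [Module ℂ X] [AddCommGroup Y] [Module ℂ Y]
  [NormedAddCommGroup H] [InnerProductSpace ℂ H]

@[simp]
theorem adjMap_apply (R : X →ₗ[ℂ] H) (h : H) (x : X) : adjMap R h x = inner ℂ (R x) h := rfl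

@[simp]
theorem Btilde_apply (B : Y →ₗ[ℂ] (X →ₗ⋆[ℂ] ℂ)) (x : X) (y : Y) :
    Btilde B x y = conj (B y x) := rfl

theorem zero_le_inner_self (v : H) : (0 : ℂ) ≤ inner ℂ v v := by
  rw [← inner_self_ofReal_re]
  exact RCLike.ofReal_nonneg.mpr inner_self_nonneg

theorem block_form_eq (A : X →ₗ[ℂ] (X →ₗ⋆[ℂ] ℂ)) (B : Y →ₗ[ℂ] (X →ₗ⋆[ℂ] ℂ))
    (D : Y →ₗ[ℂ] (Y →ₗ⋆[ℂ] ℂ)) (x : X) (y : Y) :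
    (A x + B y) x + (Btilde B x + D y) y = A x x + B y x + conj (B y x) + D y y := by
  simp only [LinearMap.add_apply, Btilde_apply]
  ring

theorem block_form_eq_of_factor {A : X →ₗ[ℂ] (X →ₗ⋆[ℂ] ℂ)} {B : Y →ₗ[ℂ] (X →ₗ⋆[ℂ] ℂ)}
    {R : X →ₗ[ℂ] H} {T : Y →ₗ[ℂ] H} (hR : ∀ x, A x = adjMap R (R x))
    (hT : ∀ y, adjMap R (T y) = B y) (D : Y →ₗ[ℂ] (Y →ₗ⋆[ℂ] ℂ)) (x : X) (y : Y) :
    (A x + B y) x + (Btilde B x + D y) y =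
      inner ℂ (R x + T y) (R x + T y) + (D y y - inner ℂ (T y) (T y)) := by
  rw [block_form_eq, hR, ← hT, inner_add_add_self]
  simp only [adjMap_apply, inner_conj_symm]
  ring

theorem block_form_smul_left (A : X →ₗ[ℂ] (X →ₗ⋆[ℂ] ℂ)) (B : Y →ₗ[ℂ] (X →ₗ⋆[ℂ] ℂ))
    (D : Y →ₗ[ℂ] (Y →ₗ⋆[ℂ] ℂ)) (c : ℂ) (x : X) (y : Y) :
    (A (c • x) + B y) (c • x) + (Btilde B (c • x) + D y) y =
      c * conj c * A x x + conj c * B y x + c * conj (B y x) + D y y := by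
  rw [block_form_eq]
  simp only [map_smul, LinearMap.smul_apply, LinearMap.map_smulₛₗ, smul_eq_mul, map_mul,
    Complex.conj_conj]
  ring

end Basic

theorem norm_sq_le_mul_of_forall_nonneg {a d : ℝ} {b : ℂ} (ha : 0 ≤ a)
    (h : ∀ c : ℂ, 0 ≤ c * conj c * a + conj c * b + c * conj b + d) : ‖b‖ ^ 2 ≤ a * d := by
  have hd : 0 ≤ d := by simpa using h 0
  have hquad : ∀ t : ℝ, 0 ≤ (a * ‖b‖ ^ 2) * (t * t) + (-2 * ‖b‖ ^ 2) * t + d := by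
    intro t
    have ht := h (-(t : ℂ) * b)
    have hc : -(t : ℂ) * b * conj (-(t : ℂ) * b) * a + conj (-(t : ℂ) * b) * b +
        -(t : ℂ) * b * conj b + d =
          (((a * ‖b‖ ^ 2) * (t * t) + (-2 * ‖b‖ ^ 2) * t + d : ℝ) : ℂ) := by
      simp only [map_mul, map_neg, Complex.conj_ofReal]
      have := Complex.mul_conj' b
      push_cast
      linear_combination (t * t * a - 2 * t) * this
    rw [hc] at ht
    exact Complex.zero_le_real.mp ht
  have hdisc := discrim_le_zero hquad
  rw [discrim] at hdisc
  rcases (norm_nonneg b).eq_or_lt with hb | hb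
  · rw [← hb, zero_pow two_ne_zero]
    exact mul_nonneg ha hd
  · nlinarith [pow_pos hb 2]

theorem LinearMap.exists_comp_eq_of_injective {R M N Y : Type*} [Semiring R] [AddCommMonoid M]
    [Module R M] [AddCommMonoid N] [Module R N] [AddCommMonoid Y] [Module R Y]
    {f : M →ₗ[R] N} (hf : Function.Injective f) {g : Y →ₗ[R] N}
    (hg : ∀ y, g y ∈ LinearMap.range f) : ∃ T : Y →ₗ[R] M, f ∘ₗ T = g :=
  ⟨(LinearEquiv.ofInjective f hf).symm.toLinearMap ∘ₗ g.codRestrict _ hg,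
    LinearMap.ext fun y => by simp⟩

theorem exists_strongDual_comp_eq_of_norm_le {𝕜 X E : Type*} [RCLike 𝕜] [AddCommGroup X]
    [Module 𝕜 X] [NormedAddCommGroup E] [NormedSpace 𝕜 E] (R : X →ₗ[𝕜] E) (f : X →ₗ[𝕜] 𝕜)
    (C : ℝ) (hf : ∀ x, ‖f x‖ ≤ C * ‖R x‖) : ∃ g : StrongDual 𝕜 E, ∀ x, g (R x) = f x := by
  obtain ⟨S, hS⟩ := R.rangeRestrict.exists_rightInverse_of_surjective R.range_rangeRestrict
  have hRS : ∀ v, R (S v) = v := fun v => congrArg Subtype.val (LinearMap.congr_fun hS v)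
  have hfS : ∀ x, f (S (R.rangeRestrict x)) = f x := by
    intro x
    have h := hf (S (R.rangeRestrict x) - x)
    rwa [map_sub R, hRS, LinearMap.codRestrict_apply, sub_self, norm_zero, mul_zero,
      norm_le_zero_iff, map_sub, sub_eq_zero] at h
  let f₀ : StrongDual 𝕜 (LinearMap.range R) :=
    (f ∘ₗ S).mkContinuous C fun v => by simpa [hRS] using hf (S v)
  obtain ⟨g, hg, -⟩ := exists_extension_norm_eq _ f₀
  exact ⟨g, fun x => (hg (R.rangeRestrict x)).trans (hfS x)⟩

section Representation

variable {X H : Type*} [AddCommGroup X] [Module ℂ X]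
  [NormedAddCommGroup H] [InnerProductSpace ℂ H]

theorem eq_zero_of_adjMap_eq_zero {R : X →ₗ[ℂ] H} {t : H}
    (ht : t ∈ (LinearMap.range R).topologicalClosure) (h : adjMap R t = 0) : t = 0 := by
  have ht' : t ∈ (LinearMap.range R).topologicalClosureᗮ := by
    rw [Submodule.orthogonal_closure]
    rintro _ ⟨x, rfl⟩
    exact LinearMap.congr_fun h x
  exact inner_self_eq_zero.mp (Submodule.inner_right_of_mem_orthogonal ht ht')

theorem adjMap_comp_subtype_injective (R : X →ₗ[ℂ] H) :
    Function.Injective (adjMap R ∘ₗ (LinearMap.range R).topologicalClosure.subtype) :=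
  (injective_iff_map_eq_zero _).mpr fun t h => Subtype.ext (eq_zero_of_adjMap_eq_zero t.2 h)

theorem exists_mem_closure_adjMap_eq [CompleteSpace H] (R : X →ₗ[ℂ] H) (ℓ : X →ₗ⋆[ℂ] ℂ)
    (C : ℝ) (hℓ : ∀ x, ‖ℓ x‖ ≤ C * ‖R x‖) :
    ∃ t ∈ (LinearMap.range R).topologicalClosure, adjMap R t = ℓ := by
  set K := (LinearMap.range R).topologicalClosure
  obtain ⟨g, hg⟩ := exists_strongDual_comp_eq_of_norm_le R
    ((starLinearEquiv ℂ).toLinearMap ∘ₛₗ ℓ) C (by simpa using hℓ)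
  set t₀ := (InnerProductSpace.toDual ℂ H).symm g
  refine ⟨K.starProjection t₀, K.starProjection_apply_mem t₀, LinearMap.ext fun x => ?_⟩
  have hx : K.starProjection (R x) = R x :=
    K.starProjection_eq_self_iff.mpr
      ((LinearMap.range R).le_topologicalClosure (LinearMap.mem_range_self R x))
  rw [adjMap_apply, ← K.inner_starProjection_left_eq_right, hx, ← inner_conj_symm,
    InnerProductSpace.toDual_symm_apply, hg]
  simp

end Representation

section PositivePair

variable {X Y H : Type*} [AddCommGroup X] [Module ℂ X] [AddCommGroup Y] [Module ℂ Y]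
  [NormedAddCommGroup H] [InnerProductSpace ℂ H]
  {A : X →ₗ[ℂ] (X →ₗ⋆[ℂ] ℂ)} {B : Y →ₗ[ℂ] (X →ₗ⋆[ℂ] ℂ)} {R : X →ₗ[ℂ] H}

theorem block_form_nonneg_of_factor {T : Y →ₗ[ℂ] H} (hR : ∀ x, A x = adjMap R (R x))
    (hT : ∀ y, adjMap R (T y) = B y) (x : X) (y : Y) :
    0 ≤ (A x + B y) x + (Btilde B x + (adjMap T ∘ₗ T) y) y := by
  rw [block_form_eq_of_factor hR hT, LinearMap.comp_apply, adjMap_apply, sub_self, add_zero]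
  exact zero_le_inner_self _

theorem adjMap_apply_le_of_block_form_nonneg {T : Y →ₗ[ℂ] H} (hR : ∀ x, A x = adjMap R (R x))
    (hT : ∀ y, adjMap R (T y) = B y) (hTR : ∀ y, T y ∈ closure (Set.range R))
    {D : Y →ₗ[ℂ] (Y →ₗ⋆[ℂ] ℂ)} (hQ : ∀ x y, 0 ≤ (A x + B y) x + (Btilde B x + D y) y) (y : Y) :
    adjMap T (T y) y ≤ D y y := by
  set c := D y y - inner ℂ (T y) (T y)
  have hrange : Set.range R ⊆ {h : H | 0 ≤ inner ℂ (h + T y) (h + T y) + c} := by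
    rintro _ ⟨x, rfl⟩
    have hx := hQ x y
    rwa [block_form_eq_of_factor hR hT] at hx
  have hneg : -T y ∈ closure (Set.range R) := by
    have := hTR y
    rw [← LinearMap.coe_range, ← Submodule.topologicalClosure_coe] at this ⊢
    exact neg_mem this
  have hc : 0 ≤ c := by
    simpa using (isClosed_le continuous_const (by fun_prop)).closure_subset_iff.mpr hrange hneg
  exact sub_nonneg.mp hc

theorem norm_apply_le_of_block_form_nonneg (hR : ∀ x, A x = adjMap R (R x))
    {D : Y →ₗ[ℂ] (Y →ₗ⋆[ℂ] ℂ)} {y : Y} (hD : 0 ≤ D y y)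
    (hQ : ∀ x, 0 ≤ (A x + B y) x + (Btilde B x + D y) y) (x : X) :
    ‖B y x‖ ≤ √(D y y).re * ‖R x‖ := by
  have hA : A x x = ((‖R x‖ ^ 2 : ℝ) : ℂ) := by
    rw [hR, adjMap_apply, ← inner_self_ofReal_re, inner_self_eq_norm_sq]
    rfl
  have hd : D y y = ((D y y).re : ℂ) :=
    Complex.eq_re_of_ofReal_le (r := 0) (by rwa [Complex.ofReal_zero])
  have hcs : ‖B y x‖ ^ 2 ≤ ‖R x‖ ^ 2 * (D y y).re :=
    norm_sq_le_mul_of_forall_nonneg (sq_nonneg _) fun c => by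
      simpa only [block_form_smul_left, hA, ← hd] using hQ (c • x)
  calc ‖B y x‖ = √(‖B y x‖ ^ 2) := (Real.sqrt_sq (norm_nonneg _)).symm
    _ ≤ √(‖R x‖ ^ 2 * (D y y).re) := Real.sqrt_le_sqrt hcs
    _ = √(D y y).re * ‖R x‖ := by
      rw [Real.sqrt_mul (sq_nonneg _), Real.sqrt_sq (norm_nonneg _), mul_comm]

theorem exists_factor_of_block_form_nonneg [CompleteSpace H] (hR : ∀ x, A x = adjMap R (R x))
    {D : Y →ₗ[ℂ] (Y →ₗ⋆[ℂ] ℂ)} (hD : ∀ y, 0 ≤ D y y)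
    (hQ : ∀ x y, 0 ≤ (A x + B y) x + (Btilde B x + D y) y) :
    ∃ T : Y →ₗ[ℂ] H, (∀ y, adjMap R (T y) = B y) ∧
      ∀ y, T y ∈ closure (Set.range R) := by
  have hrange : ∀ y, B y ∈
      LinearMap.range (adjMap R ∘ₗ (LinearMap.range R).topologicalClosure.subtype) := by
    intro y
    obtain ⟨t, ht, hBt⟩ := exists_mem_closure_adjMap_eq R (B y) _
      (norm_apply_le_of_block_form_nonneg hR (hD y) (fun x => hQ x y))
    exact ⟨⟨t, ht⟩, hBt⟩
  obtain ⟨T, hT⟩ := LinearMap.exists_comp_eq_of_injective (adjMap_comp_subtype_injective R) hrange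
  refine ⟨(LinearMap.range R).topologicalClosure.subtype ∘ₗ T, LinearMap.congr_fun hT, fun y => ?_⟩
  rw [← LinearMap.coe_range, ← Submodule.topologicalClosure_coe]
  exact (T y).2

end PositivePair

theorem schur_stmt16 {X Y H : Type} [AddCommGroup X] [Module ℂ X]
    [AddCommGroup Y] [Module ℂ Y]
    [NormedAddCommGroup H] [InnerProductSpace ℂ H] [CompleteSpace H]
    (A : X →ₗ[ℂ] (X →ₗ⋆[ℂ] ℂ)) (B : Y →ₗ[ℂ] (X →ₗ⋆[ℂ] ℂ))
    (R : X →ₗ[ℂ] H) (hR : ∀ x, A x = adjMap R (R x)) :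
    ((∃ T : Y →ₗ[ℂ] H, (∀ y, adjMap R (T y) = B y) ∧
          ∀ y, T y ∈ closure (Set.range R)) ↔
        ∃ D : Y →ₗ[ℂ] (Y →ₗ⋆[ℂ] ℂ), (∀ y, 0 ≤ D y y) ∧
          ∀ (x : X) (y : Y), 0 ≤ (A x + B y) x + ((Btilde B) x + D y) y) ∧
      ∀ T : Y →ₗ[ℂ] H, (∀ y, adjMap R (T y) = B y) →
        (∀ y, T y ∈ closure (Set.range R)) →
        ∀ D : Y →ₗ[ℂ] (Y →ₗ⋆[ℂ] ℂ), (∀ y, 0 ≤ D y y) →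
          (∀ (x : X) (y : Y), 0 ≤ (A x + B y) x + ((Btilde B) x + D y) y) →
          ∀ y, (adjMap T (T y)) y ≤ D y y := by
  refine ⟨⟨?_, ?_⟩, fun T hT hTR D _ hQ => adjMap_apply_le_of_block_form_nonneg hR hT hTR hQ⟩
  · rintro ⟨T, hT, -⟩
    exact ⟨adjMap T ∘ₗ T, fun y => zero_le_inner_self (T y), block_form_nonneg_of_factor hR hT⟩
  · rintro ⟨D, hD, hQ⟩
    exact exists_factor_of_block_form_nonneg hR hD hQ
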